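/- arXiv:2401.14406 — 4 statements merged into one kernel-verified Lean document; each statement's English description precedes it below -/
import Mathlib

section
/- The power fractional derivative admits the series representation ${}^pD_{a,\omega}^{\alpha,\beta} f(t) = \frac{1}{\chi(\alpha)} \sum_{n=0}^{\infty} (-\mu_\alpha \ln p)^n \, {}^{RL}I_{a,\omega}^{\beta n + 1}\left(\frac{(\omega f)'}{\omega}\right)(t)$ for every $t \in [a,b]$, where the series converges locally uniformly in $t$. -/
open MeasureTheory

/-- The power Mittag–Leffler function (real version). -/
noncomputable def pE (p β s : ℝ) : ℝ :=
  ∑' n : ℕ, (s * Real.log p) ^ n / Real.Gamma (β * n + 1)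

/-- Weighted Riemann–Liouville fractional integral of order `β`. -/
noncomputable def RLI (a : ℝ) (ω : ℝ → ℝ) (β : ℝ) (f : ℝ → ℝ) (t : ℝ) : ℝ :=
  (1 / (Real.Gamma β * ω t)) * ∫ τ in a..t, (t - τ) ^ (β - 1) * (ω τ * f τ)

/-- The power fractional derivative (Caputo sense) with weight `ω`,
normalization value `Nα`, so `χ(α) = (1-α)/Nα` and `μ_α = α/(1-α)`. -/
noncomputable def pD (a : ℝ) (ω : ℝ → ℝ) (α β p Nα : ℝ) (f : ℝ → ℝ) (t : ℝ) : ℝ :=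
  (1 / (((1 - α) / Nα) * ω t)) *
    ∫ τ in a..t, pE p β (-(α / (1 - α)) * (t - τ) ^ β) * deriv (fun s => ω s * f s) τ

/-- The power fractional integral, `φ(α) = α/Nα`. -/
noncomputable def pI (a : ℝ) (ω : ℝ → ℝ) (α β p Nα : ℝ) (f : ℝ → ℝ) (t : ℝ) : ℝ :=
  ((1 - α) / Nα) * f t + Real.log p * (α / Nα) * RLI a ω β f t

/-!
Expanding the kernel, `pE p β (m * (t - τ) ^ β) = ∑ (m log p)ⁿ (t - τ)^(βn) / Γ(βn + 1)`, and
integrating term by term against `g = (ω f)'` gives the series. Both the interchange of sum and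
integral and the uniform convergence on `[a, b]` follow from the majorant
`(|m log p| (b - a)^β)ⁿ / Γ(βn + 1) · ∫ |g|`, which is summable because `Γ(s) ≥ e^{-y} y^{s-1}`
for `s ≥ 1` and every `y ≥ 0` lets `Γ(βn + 1)` outgrow every geometric sequence.
Integrability of `g` comes from `f, f' ∈ L²` on a bounded interval and `ω ∈ C¹` with `ω > 0`.
-/

open Set Real

theorem Real.exp_neg_mul_rpow_le_Gamma {s y : ℝ} (hs : 1 ≤ s) (hy : 0 ≤ y) :
    exp (-y) * y ^ (s - 1) ≤ Gamma s := by
  have hconv := GammaIntegral_convergent (by linarith : 0 < s)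
  rw [Gamma_eq_integral (by linarith)]
  calc exp (-y) * y ^ (s - 1) = ∫ x in Ioi y, exp (-x) * y ^ (s - 1) := by
        rw [integral_mul_const, integral_exp_neg_Ioi]
    _ ≤ ∫ x in Ioi y, exp (-x) * x ^ (s - 1) :=
        setIntegral_mono_on ((integrableOn_exp_neg_Ioi y).mul_const _)
          (hconv.mono_set (Ioi_subset_Ioi hy)) measurableSet_Ioi fun x hx =>
          mul_le_mul_of_nonneg_left (rpow_le_rpow hy (le_of_lt hx) (by linarith)) (exp_pos _).le
    _ ≤ ∫ x in Ioi 0, exp (-x) * x ^ (s - 1) :=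
        setIntegral_mono_set hconv
          (ae_restrict_of_forall_mem measurableSet_Ioi fun x hx =>
            mul_nonneg (exp_pos _).le (rpow_nonneg (le_of_lt hx) _))
          (Ioi_subset_Ioi hy).eventuallyLE

theorem summable_pow_div_Gamma {β : ℝ} (hβ : 0 < β) (K : ℝ) :
    Summable fun n : ℕ => K ^ n / Gamma (β * n + 1) := by
  set L := 2 * |K| + 1
  have hL : 0 < L := by positivity
  set y := L ^ β⁻¹
  have hΓ : ∀ n : ℕ, exp (-y) * L ^ n ≤ Gamma (β * n + 1) := fun n => by
    have hs : 1 ≤ β * n + 1 := le_add_of_nonneg_left (by positivity)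
    have := exp_neg_mul_rpow_le_Gamma hs (rpow_nonneg hL.le β⁻¹)
    rwa [add_sub_cancel_right, ← rpow_mul hL.le, inv_mul_cancel_left₀ hβ.ne', rpow_natCast] at this
  refine Summable.of_norm_bounded
    ((summable_geometric_of_lt_one (r := |K| / L) (by positivity) ?_).mul_left (exp y)) fun n => ?_
  · rw [div_lt_one hL]; linarith [abs_nonneg K]
  · have hpos : 0 < exp (-y) * L ^ n := by positivity
    rw [norm_div, norm_pow, Real.norm_eq_abs, Real.norm_of_nonneg (hpos.le.trans (hΓ n)),
      div_pow, div_le_iff₀ (hpos.trans_le (hΓ n))]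
    calc |K| ^ n = exp y * (|K| ^ n / L ^ n) * (exp (-y) * L ^ n) := by
          rw [exp_neg]; field_simp
      _ ≤ exp y * (|K| ^ n / L ^ n) * Gamma (β * n + 1) := by gcongr; exact hΓ n

theorem hasSum_pE_mul_rpow {β : ℝ} (hβ : 0 < β) (p m : ℝ) {x : ℝ} (hx : 0 ≤ x) :
    HasSum (fun n : ℕ => (m * log p) ^ n / Gamma (β * n + 1) * x ^ (β * n))
      (pE p β (m * x ^ β)) := by
  rw [pE]
  convert (summable_pow_div_Gamma hβ (m * x ^ β * log p)).hasSum using 1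
  funext n
  rw [rpow_mul_natCast hx]
  ring

theorem Real.rpow_mul_natCast_le {x L β : ℝ} (hx : 0 ≤ x) (hxL : x ≤ L) (hβ : 0 ≤ β) (n : ℕ) :
    x ^ (β * n) ≤ (L ^ β) ^ n := by
  rw [rpow_mul_natCast hx]
  gcongr

theorem norm_intervalIntegral_rpow_mul_le {g : ℝ → ℝ} {a b t γ : ℝ} (ht : t ∈ Icc a b)
    (hγ : 0 ≤ γ) (hg : IntervalIntegrable g volume a b) :
    ‖∫ τ in a..t, (t - τ) ^ γ * g τ‖ ≤ (b - a) ^ γ * ∫ τ in a..b, ‖g τ‖ := by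
  have hgt : IntervalIntegrable g volume a t :=
    hg.mono_set (uIcc_subset_uIcc_left (Icc_subset_uIcc ht))
  calc ‖∫ τ in a..t, (t - τ) ^ γ * g τ‖ ≤ ∫ τ in a..t, (b - a) ^ γ * ‖g τ‖ := by
        refine intervalIntegral.norm_integral_le_of_norm_le ht.1 (.of_forall fun τ hτ => ?_)
          (hgt.norm.const_mul _)
        rw [norm_mul, Real.norm_of_nonneg (rpow_nonneg (by linarith [hτ.2]) _)]
        gcongr <;> linarith [hτ.1, hτ.2, ht.2]
    _ ≤ (b - a) ^ γ * ∫ τ in a..b, ‖g τ‖ := by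
        rw [intervalIntegral.integral_const_mul]
        gcongr
        · exact rpow_nonneg (by linarith [ht.1, ht.2]) _
        · exact intervalIntegral.integral_mono_interval le_rfl ht.1 ht.2
            (.of_forall fun τ => norm_nonneg _) hg.norm

theorem hasSum_integral_pE_mul {β : ℝ} (hβ : 0 < β) (p m : ℝ) {g : ℝ → ℝ} {a t : ℝ}
    (ht : a ≤ t) (hg : IntervalIntegrable g volume a t) :
    HasSum (fun n : ℕ => (m * log p) ^ n / Gamma (β * n + 1) * ∫ τ in a..t, (t - τ) ^ (β * n) * g τ)
      (∫ τ in a..t, pE p β (m * (t - τ) ^ β) * g τ) := by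
  set K := |m * log p| * (t - a) ^ β
  simp only [← intervalIntegral.integral_const_mul, ← mul_assoc]
  refine intervalIntegral.hasSum_integral_of_dominated_convergence
    (fun n τ => K ^ n / Gamma (β * n + 1) * ‖g τ‖) (fun n => ?_) (fun n => ?_)
    (.of_forall fun τ _ => (summable_pow_div_Gamma hβ K).mul_right _) ?_
    (.of_forall fun τ hτ => ?_)
  · exact ((continuous_const.mul ((continuous_const.sub continuous_id).rpow_const
      fun _ => Or.inr (by positivity))).aestronglyMeasurable).mul hg.def'.aestronglyMeasurable
  · refine .of_forall fun τ hτ => ?_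
    rw [uIoc_of_le ht] at hτ
    have hΓ : 0 < Gamma (β * n + 1) := Gamma_pos_of_pos (by positivity)
    have htτ : 0 ≤ t - τ := by linarith [hτ.2]
    rw [norm_mul, norm_mul, norm_div, norm_pow, Real.norm_of_nonneg hΓ.le, Real.norm_eq_abs,
      Real.norm_of_nonneg (rpow_nonneg htτ _), mul_pow, mul_div_right_comm]
    gcongr
    exact rpow_mul_natCast_le htτ (by linarith [hτ.1]) hβ.le n
  · simp only [tsum_mul_right]
    exact hg.norm.const_mul _
  · rw [uIoc_of_le ht] at hτ
    exact (hasSum_pE_mul_rpow hβ p m (by linarith [hτ.2])).mul_right _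

theorem RLI_div_eq {ω g : ℝ → ℝ} {a t γ : ℝ} (hω : ∀ τ ∈ uIcc a t, ω τ ≠ 0) :
    RLI a ω (γ + 1) (fun s => g s / ω s) t =
      (Gamma (γ + 1) * ω t)⁻¹ * ∫ τ in a..t, (t - τ) ^ γ * g τ := by
  rw [RLI, one_div, add_sub_cancel_right]
  congr 1
  refine intervalIntegral.integral_congr fun τ hτ => ?_
  simp only [mul_div_cancel₀ _ (hω τ hτ)]

theorem hasSum_pow_mul_RLI {β : ℝ} (hβ : 0 < β) (p m : ℝ) {ω g : ℝ → ℝ} {a t : ℝ} (ht : a ≤ t)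
    (hω : ∀ τ ∈ uIcc a t, ω τ ≠ 0) (hg : IntervalIntegrable g volume a t) :
    HasSum (fun n : ℕ => (m * log p) ^ n * RLI a ω (β * n + 1) (fun s => g s / ω s) t)
      ((ω t)⁻¹ * ∫ τ in a..t, pE p β (m * (t - τ) ^ β) * g τ) := by
  refine ((hasSum_integral_pE_mul hβ p m ht hg).mul_left (ω t)⁻¹).congr_fun fun n => ?_
  rw [RLI_div_eq hω, mul_inv]
  ring

theorem norm_pow_mul_RLI_le {β : ℝ} (hβ : 0 ≤ β) {ω g : ℝ → ℝ} {a b t c C : ℝ} (ht : t ∈ Icc a b)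
    (hω : ∀ τ ∈ uIcc a t, ω τ ≠ 0) (hC : ‖(ω t)⁻¹‖ ≤ C) (hg : IntervalIntegrable g volume a b)
    (n : ℕ) :
    ‖c ^ n * RLI a ω (β * n + 1) (fun s => g s / ω s) t‖ ≤
      (|c| * (b - a) ^ β) ^ n / Gamma (β * n + 1) * (C * ∫ τ in a..b, ‖g τ‖) := by
  have hΓ : 0 < Gamma (β * n + 1) := Gamma_pos_of_pos (by positivity)
  have hba : 0 ≤ b - a := by linarith [ht.1, ht.2]
  have hint := norm_intervalIntegral_rpow_mul_le ht (by positivity : 0 ≤ β * n) hg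
  rw [rpow_mul_natCast hba] at hint
  rw [RLI_div_eq hω, mul_inv, norm_mul, norm_mul, norm_mul, norm_pow, norm_inv,
    Real.norm_of_nonneg hΓ.le, Real.norm_eq_abs, mul_pow]
  calc |c| ^ n * ((Gamma (β * n + 1))⁻¹ * ‖(ω t)⁻¹‖ * ‖∫ τ in a..t, (t - τ) ^ (β * n) * g τ‖)
      ≤ |c| ^ n * ((Gamma (β * n + 1))⁻¹ * C * (((b - a) ^ β) ^ n * ∫ τ in a..b, ‖g τ‖)) := by
        gcongr
        exact mul_nonneg (inv_nonneg.2 hΓ.le) ((norm_nonneg _).trans hC)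
    _ = |c| ^ n * ((b - a) ^ β) ^ n / Gamma (β * n + 1) * (C * ∫ τ in a..b, ‖g τ‖) := by ring

theorem norm_deriv_mul_le {ω f : ℝ → ℝ} {x : ℝ} (hω : DifferentiableAt ℝ ω x) (hx : ω x ≠ 0) :
    ‖deriv (fun s => ω s * f s) x‖ ≤ ‖deriv ω x‖ * ‖f x‖ + ‖ω x‖ * ‖deriv f x‖ := by
  -- `f = (ω * f) / ω` near `x`; where `ω * f` is not differentiable, `deriv` is the junk value `0`.
  by_cases hωf : DifferentiableAt ℝ (fun s => ω s * f s) x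
  · have hf : DifferentiableAt ℝ f x := by
      refine (hωf.div hω hx).congr_of_eventuallyEq ?_
      filter_upwards [hω.continuousAt.eventually_ne hx] with s hs
      rw [Pi.div_apply, mul_div_cancel_left₀ _ hs]
    rw [deriv_fun_mul hω hf, ← norm_mul, ← norm_mul]
    exact norm_add_le _ _
  · rw [deriv_zero_of_not_differentiableAt hωf, norm_zero]
    positivity

theorem integrableOn_deriv_mul {ω f : ℝ → ℝ} {a b : ℝ} (hω : ContDiffOn ℝ 1 ω (Icc a b))
    (hω0 : ∀ t ∈ Ioo a b, ω t ≠ 0) (hf : IntegrableOn f (Ioo a b))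
    (hf' : IntegrableOn (deriv f) (Ioo a b)) :
    IntegrableOn (deriv fun s => ω s * f s) (Ioo a b) := by
  rcases le_or_gt b a with hba | hab
  · simp [Ioo_eq_empty hba.not_gt]
  obtain ⟨C, hC⟩ := isCompact_Icc.exists_bound_of_continuousOn hω.continuousOn
  obtain ⟨C', hC'⟩ := isCompact_Icc.exists_bound_of_continuousOn
    (hω.continuousOn_derivWithin (uniqueDiffOn_Icc hab) le_rfl)
  refine Integrable.mono' ((hf.norm.const_mul C').add (hf'.norm.const_mul C))
    (measurable_deriv _).aestronglyMeasurable ?_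
  refine ae_restrict_of_forall_mem measurableSet_Ioo fun x hx => ?_
  have hnhds : Icc a b ∈ nhds x := Icc_mem_nhds hx.1 hx.2
  have hωx : DifferentiableAt ℝ ω x :=
    (hω.differentiableOn one_ne_zero x (Ioo_subset_Icc_self hx)).differentiableAt hnhds
  calc ‖deriv (fun s => ω s * f s) x‖ ≤ ‖deriv ω x‖ * ‖f x‖ + ‖ω x‖ * ‖deriv f x‖ :=
        norm_deriv_mul_le hωx (hω0 x hx)
    _ ≤ C' * ‖f x‖ + C * ‖deriv f x‖ := by
        rw [← derivWithin_of_mem_nhds hnhds]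
        gcongr
        exacts [hC' x (Ioo_subset_Icc_self hx), hC x (Ioo_subset_Icc_self hx)]

theorem pD_series_repr_general (a b α β p Nα : ℝ) (hab : a ≤ b)
    (hβ : 0 < β) (ω f : ℝ → ℝ)
    (hω : ContDiffOn ℝ 1 ω (Set.Icc a b)) (hωpos : ∀ t ∈ Set.Icc a b, 0 < ω t)
    (hf : MemLp f 2 (MeasureTheory.volume.restrict (Set.Ioo a b)))
    (hf' : MemLp (deriv f) 2 (MeasureTheory.volume.restrict (Set.Ioo a b))) :
    (∀ t ∈ Set.Icc a b,
      pD a ω α β p Nα f t =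
        (Nα / (1 - α)) * ∑' n : ℕ, (-(α / (1 - α)) * Real.log p) ^ n *
          RLI a ω (β * n + 1) (fun s => deriv (fun u => ω u * f u) s / ω s) t) ∧
    TendstoLocallyUniformlyOn
      (fun (N : ℕ) (t : ℝ) =>
        (Nα / (1 - α)) * ∑ n ∈ Finset.range N, (-(α / (1 - α)) * Real.log p) ^ n *
          RLI a ω (β * n + 1) (fun s => deriv (fun u => ω u * f u) s / ω s) t)
      (pD a ω α β p Nα f) Filter.atTop (Set.Icc a b) := by
  have hω0 : ∀ t ∈ Icc a b, ∀ τ ∈ uIcc a t, ω τ ≠ 0 := fun t ht τ hτ =>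
    (hωpos τ (uIcc_subset_Icc (left_mem_Icc.2 hab) ht hτ)).ne'
  have hg : IntervalIntegrable (deriv fun u => ω u * f u) volume a b :=
    (intervalIntegrable_iff_integrableOn_Ioo_of_le hab).2 <| integrableOn_deriv_mul hω
      (fun t ht => (hωpos t (Ioo_subset_Icc_self ht)).ne') (hf.integrable one_le_two)
      (hf'.integrable one_le_two)
  have hrepr : ∀ t ∈ Icc a b, pD a ω α β p Nα f t =
      (Nα / (1 - α)) * ∑' n : ℕ, (-(α / (1 - α)) * log p) ^ n *
        RLI a ω (β * n + 1) (fun s => deriv (fun u => ω u * f u) s / ω s) t := fun t ht => by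
    have hgt := hg.mono_set (uIcc_subset_uIcc_left (Icc_subset_uIcc ht))
    rw [(hasSum_pow_mul_RLI hβ p _ ht.1 (hω0 t ht) hgt).tsum_eq, pD, one_div, mul_inv, inv_div]
    ring
  refine ⟨hrepr, ?_⟩
  obtain ⟨C, hC⟩ := isCompact_Icc.exists_bound_of_continuousOn
    (hω.continuousOn.inv₀ fun t ht => (hωpos t ht).ne')
  have hM := ((summable_pow_div_Gamma hβ (|-(α / (1 - α)) * log p| * (b - a) ^ β)).mul_right
    (C * ∫ τ in a..b, ‖deriv (fun u => ω u * f u) τ‖)).mul_left ‖Nα / (1 - α)‖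
  simp only [Finset.mul_sum]
  refine ((tendstoUniformlyOn_tsum_nat hM fun n t ht => ?_).congr_right fun t ht => ?_)
    |>.tendstoLocallyUniformlyOn
  · rw [norm_mul]
    gcongr
    exact norm_pow_mul_RLI_le hβ.le ht (hω0 t ht) (hC t ht) hg n
  · rw [tsum_mul_left, hrepr t ht]

/-- Series representation of the power fractional derivative, together with
locally uniform convergence of the partial sums on `[a,b]`. -/
theorem pD_series_repr (a b α β p Nα : ℝ) (hab : a ≤ b) (hα0 : 0 ≤ α) (hα1 : α < 1)
    (hβ : 0 < β) (hp : 0 < p) (hN : 0 < Nα) (ω f : ℝ → ℝ)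
    (hω : ContDiffOn ℝ 1 ω (Set.Icc a b)) (hωpos : ∀ t ∈ Set.Icc a b, 0 < ω t)
    (hf : MemLp f 2 (MeasureTheory.volume.restrict (Set.Ioo a b)))
    (hf' : MemLp (deriv f) 2 (MeasureTheory.volume.restrict (Set.Ioo a b))) :
    (∀ t ∈ Set.Icc a b,
      pD a ω α β p Nα f t =
        (Nα / (1 - α)) * ∑' n : ℕ, (-(α / (1 - α)) * Real.log p) ^ n *
          RLI a ω (β * n + 1) (fun s => deriv (fun u => ω u * f u) s / ω s) t) ∧
    TendstoLocallyUniformlyOn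
      (fun (N : ℕ) (t : ℝ) =>
        (Nα / (1 - α)) * ∑ n ∈ Finset.range N, (-(α / (1 - α)) * Real.log p) ^ n *
          RLI a ω (β * n + 1) (fun s => deriv (fun u => ω u * f u) s / ω s) t)
      (pD a ω α β p Nα f) Filter.atTop (Set.Icc a b) :=
  pD_series_repr_general a b α β p Nα hab hβ ω f hω hωpos hf hf'
end

section
/- For every natural number $n$ and every continuous function $f$ on $[a,b]$, the $n$-fold iterate of the power fractional integral satisfies ${}^pI_{a,\omega}^{n[\alpha,\beta]} f(t) = \sum_{m=0}^{n} \binom{n}{m} \chi(\alpha)^{n-m} (\ln p \cdot \varphi(\alpha))^m \, {}^{RL}I_{a,\omega}^{m\beta} f(t)$ for all $t \in [a,b]$, where ${}^{RL}I_{a,\omega}^{0} f = f$. -/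
open MeasureTheory

/-!
Multiplying by `ω` turns `RLI a ω γ f` into `ω⁻¹` times the plain Riemann–Liouville integral
`Iᵞ (ω f)`. For the latter, Fubini on the triangle `a < σ ≤ τ ≤ t` and the Beta integral
`∫_σ^t (t - τ)^(β₁-1) (τ - σ)^(β₂-1) dτ = B(β₁, β₂) (t - σ)^(β₁+β₂-1)` give the semigroup law
`I^β₁ I^β₂ = I^(β₁+β₂)`. Hence `pI = χ + c · I^β` acts on the functions `I^(mβ) f` like the
polynomial `χ + c X` on the monomials `X^m`, and its `n`-th iterate expands by Pascal's rule.
The same Fubini argument makes `τ ↦ (t - τ)^(β-1) ω(τ) I^(mβ) f(τ)` integrable, which is what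
lets `I^β` pass through the finite sums of the expansion.
-/

open Set
open ProbabilityTheory (beta beta_pos beta_eq_betaIntegralReal)

lemma intervalIntegrable_sub_rpow {γ : ℝ} (hγ : 0 < γ) (c t : ℝ) :
    IntervalIntegrable (fun τ => (t - τ) ^ (γ - 1)) volume c t := by
  simpa using (intervalIntegral.intervalIntegrable_rpow' (a := t - c) (b := t - t) (r := γ - 1)
    (by linarith)).comp_sub_left t

lemma integral_rpow_mul_one_sub_rpow {u v : ℝ} (hu : 0 < u) (hv : 0 < v) :
    ∫ x in (0 : ℝ)..1, x ^ (u - 1) * (1 - x) ^ (v - 1) = beta u v := by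
  have hofReal : Complex.betaIntegral u v =
      ↑(∫ x in (0 : ℝ)..1, x ^ (u - 1) * (1 - x) ^ (v - 1)) := by
    rw [Complex.betaIntegral, ← intervalIntegral.integral_ofReal]
    refine intervalIntegral.integral_congr fun x hx => ?_
    rw [uIcc_of_le zero_le_one] at hx
    simp only [Complex.ofReal_mul, Complex.ofReal_cpow hx.1,
      Complex.ofReal_cpow (sub_nonneg.2 hx.2)]
    push_cast
    rfl
  rw [beta_eq_betaIntegralReal u v hu hv, hofReal, Complex.ofReal_re]

lemma integral_sub_rpow_mul_rpow_sub {β₁ β₂ σ t : ℝ} (h₁ : 0 < β₁) (h₂ : 0 < β₂) (hσt : σ < t) :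
    ∫ τ in σ..t, (t - τ) ^ (β₁ - 1) * (τ - σ) ^ (β₂ - 1) =
      beta β₁ β₂ * (t - σ) ^ (β₁ + β₂ - 1) := by
  have hc : 0 < t - σ := sub_pos.2 hσt
  have hsub := intervalIntegral.integral_comp_mul_add
    (fun τ => (t - τ) ^ (β₁ - 1) * (τ - σ) ^ (β₂ - 1)) hc.ne' σ (a := 0) (b := 1)
  simp only [mul_zero, zero_add, mul_one, sub_add_cancel] at hsub
  have hpt : ∀ x ∈ uIcc (0 : ℝ) 1,
      (t - ((t - σ) * x + σ)) ^ (β₁ - 1) * ((t - σ) * x + σ - σ) ^ (β₂ - 1) =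
        (t - σ) ^ (β₁ + β₂ - 2) * (x ^ (β₂ - 1) * (1 - x) ^ (β₁ - 1)) := by
    intro x hx
    rw [uIcc_of_le zero_le_one] at hx
    rw [show t - ((t - σ) * x + σ) = (t - σ) * (1 - x) by ring, add_sub_cancel_right,
      Real.mul_rpow hc.le (by linarith [hx.2]), Real.mul_rpow hc.le hx.1,
      show β₁ + β₂ - 2 = (β₁ - 1) + (β₂ - 1) by ring, Real.rpow_add hc]
    ring
  rw [intervalIntegral.integral_congr hpt, intervalIntegral.integral_const_mul,
    integral_rpow_mul_one_sub_rpow h₂ h₁, smul_eq_mul, eq_inv_mul_iff_mul_eq₀ hc.ne'] at hsub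
  rw [← hsub, show β₁ + β₂ - 1 = 1 + (β₁ + β₂ - 2) by ring, Real.rpow_add hc, Real.rpow_one,
    beta, beta, add_comm β₂, mul_comm (Real.Gamma β₂)]
  ring

lemma integral_sub_rpow_mul_rpow_sub_mul {β₁ β₂ σ t : ℝ} (h₁ : 0 < β₁) (h₂ : 0 < β₂)
    (hσt : σ < t) (c : ℝ) :
    ∫ τ in σ..t, (t - τ) ^ (β₁ - 1) * ((τ - σ) ^ (β₂ - 1) * c) =
      beta β₁ β₂ * ((t - σ) ^ (β₁ + β₂ - 1) * c) := by
  simp only [← mul_assoc]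
  rw [intervalIntegral.integral_mul_const, integral_sub_rpow_mul_rpow_sub h₁ h₂ hσt]

-- The kernel product is integrable because its integral is the nonzero Beta value.
lemma intervalIntegrable_sub_rpow_mul_rpow_sub {β₁ β₂ σ t : ℝ} (h₁ : 0 < β₁) (h₂ : 0 < β₂)
    (hσt : σ < t) :
    IntervalIntegrable (fun τ => (t - τ) ^ (β₁ - 1) * (τ - σ) ^ (β₂ - 1)) volume σ t :=
  intervalIntegral.intervalIntegrable_of_integral_ne_zero <| by
    rw [integral_sub_rpow_mul_rpow_sub h₁ h₂ hσt]
    exact (mul_pos (beta_pos h₁ h₂) (Real.rpow_pos_of_pos (sub_pos.2 hσt) _)).ne'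

def triangle (a t : ℝ) : Set (ℝ × ℝ) := {q | a < q.2 ∧ q.2 ≤ q.1 ∧ q.1 ≤ t}

lemma measurableSet_triangle (a t : ℝ) : MeasurableSet (triangle a t) :=
  (measurableSet_lt measurable_const measurable_snd).inter
    ((measurableSet_le measurable_snd measurable_fst).inter
      (measurableSet_le measurable_fst measurable_const))

section Triangle

variable {M : Type*} [Zero M] {a t : ℝ}

lemma indicator_triangle_apply_left (F : ℝ × ℝ → M) (τ σ : ℝ) :
    (triangle a t).indicator F (τ, σ) =
      (Ioc a t).indicator (fun τ => (Ioc a τ).indicator (fun σ => F (τ, σ)) σ) τ := by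
  simp only [indicator_apply, triangle, mem_ofPred_eq, mem_Ioc]
  split_ifs <;> first | rfl | (exfalso; grind)

lemma indicator_triangle_apply_right (F : ℝ × ℝ → M) (τ σ : ℝ) :
    (triangle a t).indicator F (τ, σ) =
      (Ioc a t).indicator (fun σ => (Icc σ t).indicator (fun τ => F (τ, σ)) τ) σ := by
  simp only [indicator_apply, triangle, mem_ofPred_eq, mem_Ioc, mem_Icc]
  split_ifs <;> first | rfl | (exfalso; grind)

end Triangle

section TriangleIntegral

variable {E : Type*} [NormedAddCommGroup E] [NormedSpace ℝ E] {a t : ℝ}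

lemma integral_indicator_triangle_left (F : ℝ × ℝ → E) (τ : ℝ) :
    ∫ σ, (triangle a t).indicator F (τ, σ) =
      (Ioc a t).indicator (fun τ => ∫ σ in a..τ, F (τ, σ)) τ := by
  simp_rw [indicator_triangle_apply_left]
  by_cases hτ : τ ∈ Ioc a t
  · simp only [indicator_of_mem hτ]
    rw [MeasureTheory.integral_indicator measurableSet_Ioc, intervalIntegral.integral_of_le hτ.1.le]
  · simp [indicator_of_notMem hτ]

lemma integral_indicator_triangle_right (F : ℝ × ℝ → E) (σ : ℝ) :
    ∫ τ, (triangle a t).indicator F (τ, σ) =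
      (Ioc a t).indicator (fun σ => ∫ τ in σ..t, F (τ, σ)) σ := by
  simp_rw [indicator_triangle_apply_right]
  by_cases hσ : σ ∈ Ioc a t
  · simp only [indicator_of_mem hσ]
    rw [MeasureTheory.integral_indicator measurableSet_Icc, integral_Icc_eq_integral_Ioc,
      intervalIntegral.integral_of_le hσ.2]
  · simp [indicator_of_notMem hσ]

lemma integral_integral_swap_triangle {F : ℝ × ℝ → E} (hat : a ≤ t)
    (hF : IntegrableOn F (triangle a t)) :
    ∫ τ in a..t, ∫ σ in a..τ, F (τ, σ) = ∫ σ in a..t, ∫ τ in σ..t, F (τ, σ) := by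
  have hG := (integrable_indicator_iff (measurableSet_triangle a t)).2 hF
  rw [Measure.volume_eq_prod] at hG
  rw [intervalIntegral.integral_of_le hat, intervalIntegral.integral_of_le hat,
    ← MeasureTheory.integral_indicator measurableSet_Ioc,
    ← MeasureTheory.integral_indicator measurableSet_Ioc]
  simp_rw [← integral_indicator_triangle_left, ← integral_indicator_triangle_right]
  rw [← integral_prod _ hG, integral_prod_symm _ hG]

lemma intervalIntegrable_integral_triangle {F : ℝ × ℝ → E} (hat : a ≤ t)
    (hF : IntegrableOn F (triangle a t)) :
    IntervalIntegrable (fun τ => ∫ σ in a..τ, F (τ, σ)) volume a t := by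
  have hG := (integrable_indicator_iff (measurableSet_triangle a t)).2 hF
  rw [Measure.volume_eq_prod] at hG
  have h := hG.integral_prod_left
  simp_rw [integral_indicator_triangle_left] at h
  rw [intervalIntegrable_iff_integrableOn_Ioc_of_le hat]
  exact (integrable_indicator_iff measurableSet_Ioc).1 h

end TriangleIntegral

noncomputable def riemannLiouville (a γ : ℝ) (g : ℝ → ℝ) (t : ℝ) : ℝ :=
  (Real.Gamma γ)⁻¹ * ∫ τ in a..t, (t - τ) ^ (γ - 1) * g τ

section RiemannLiouville

variable {a t β₁ β₂ : ℝ} {g : ℝ → ℝ}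

lemma riemannLiouville_congr {g₁ g₂ : ℝ → ℝ} {γ : ℝ} (hat : a ≤ t) (h : EqOn g₁ g₂ (Icc a t)) :
    riemannLiouville a γ g₁ t = riemannLiouville a γ g₂ t := by
  unfold riemannLiouville
  congr 1
  refine intervalIntegral.integral_congr fun τ hτ => ?_
  rw [uIcc_of_le hat] at hτ
  rw [h hτ]

lemma aestronglyMeasurable_rpow_mul_rpow_triangle (hg : ContinuousOn g (Icc a t)) :
    AEStronglyMeasurable
      (fun q : ℝ × ℝ => (t - q.1) ^ (β₁ - 1) * ((q.1 - q.2) ^ (β₂ - 1) * g q.2))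
      ((volume.prod volume).restrict (triangle a t)) := by
  have hgT : AEStronglyMeasurable (fun q : ℝ × ℝ => g q.2)
      ((volume.prod volume).restrict (triangle a t)) :=
    ((hg.comp continuousOn_snd (mapsTo_preimage _ _)).aestronglyMeasurable
      (measurableSet_Icc.preimage measurable_snd)).mono_measure
      (Measure.restrict_mono (fun q (hq : q ∈ triangle a t) =>
        show q.2 ∈ Icc a t from ⟨hq.1.le, hq.2.1.trans hq.2.2⟩) le_rfl)
  have h₁m : Measurable fun q : ℝ × ℝ => (t - q.1) ^ (β₁ - 1) := by fun_prop
  have h₂m : Measurable fun q : ℝ × ℝ => (q.1 - q.2) ^ (β₂ - 1) := by fun_prop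
  exact h₁m.aestronglyMeasurable.mul (h₂m.aestronglyMeasurable.mul hgT)

lemma integrableOn_triangle_rpow_mul_rpow (h₁ : 0 < β₁) (h₂ : 0 < β₂) (hat : a ≤ t)
    (hg : ContinuousOn g (Icc a t)) :
    IntegrableOn (fun q : ℝ × ℝ => (t - q.1) ^ (β₁ - 1) * ((q.1 - q.2) ^ (β₂ - 1) * g q.2))
      (triangle a t) := by
  have hT := measurableSet_triangle a t
  have hmeas := (aestronglyMeasurable_indicator_iff hT).2
    (aestronglyMeasurable_rpow_mul_rpow_triangle (β₁ := β₁) (β₂ := β₂) hg)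
  rw [← integrable_indicator_iff hT, Measure.volume_eq_prod, integrable_prod_iff' hmeas]
  constructor
  · filter_upwards [Measure.ae_ne volume t] with σ hσt
    simp_rw [indicator_triangle_apply_right]
    by_cases hσ : σ ∈ Ioc a t
    · simp only [indicator_of_mem hσ]
      rw [integrable_indicator_iff measurableSet_Icc, integrableOn_Icc_iff_integrableOn_Ioc,
        ← intervalIntegrable_iff_integrableOn_Ioc_of_le hσ.2]
      simpa only [mul_assoc] using
        (intervalIntegrable_sub_rpow_mul_rpow_sub h₁ h₂ (lt_of_le_of_ne hσ.2 hσt)).mul_const (g σ)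
    · simp [indicator_of_notMem hσ]
  · simp_rw [norm_indicator_eq_indicator_norm, integral_indicator_triangle_right,
      integrable_indicator_iff measurableSet_Ioc]
    rw [integrableOn_Ioc_iff_integrableOn_Ioo]
    have hdom : IntegrableOn
        (fun σ => beta β₁ β₂ * ((t - σ) ^ (β₁ + β₂ - 1) * ‖g σ‖)) (Ioo a t) := by
      refine IntegrableOn.mono_set ?_ Ioo_subset_Ioc_self
      rw [← intervalIntegrable_iff_integrableOn_Ioc_of_le hat]
      exact ((intervalIntegrable_sub_rpow (add_pos h₁ h₂) a t).mul_continuousOn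
        (by rw [uIcc_of_le hat]; exact hg.norm)).const_mul _
    refine hdom.congr_fun (fun σ hσ => ?_) measurableSet_Ioo
    dsimp only
    rw [← integral_sub_rpow_mul_rpow_sub_mul h₁ h₂ hσ.2]
    refine intervalIntegral.integral_congr fun τ hτ => ?_
    rw [uIcc_of_le hσ.2.le] at hτ
    simp only [norm_mul, Real.norm_of_nonneg (Real.rpow_nonneg (sub_nonneg.2 hτ.1) _),
      Real.norm_of_nonneg (Real.rpow_nonneg (sub_nonneg.2 hτ.2) _)]

theorem riemannLiouville_riemannLiouville (h₁ : 0 < β₁) (h₂ : 0 < β₂) (hat : a ≤ t)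
    (hg : ContinuousOn g (Icc a t)) :
    riemannLiouville a β₁ (riemannLiouville a β₂ g) t = riemannLiouville a (β₁ + β₂) g t := by
  have hswap :=
    integral_integral_swap_triangle hat (integrableOn_triangle_rpow_mul_rpow h₁ h₂ hat hg)
  have hinner : ∀ᵐ σ : ℝ, σ ∈ uIoc a t →
      ∫ τ in σ..t, (t - τ) ^ (β₁ - 1) * ((τ - σ) ^ (β₂ - 1) * g σ) =
        beta β₁ β₂ * ((t - σ) ^ (β₁ + β₂ - 1) * g σ) := by
    filter_upwards [Measure.ae_ne volume t] with σ hσt hσ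
    rw [uIoc_of_le hat] at hσ
    exact integral_sub_rpow_mul_rpow_sub_mul h₁ h₂ (lt_of_le_of_ne hσ.2 hσt) (g σ)
  have hΓ₁ := (Real.Gamma_pos_of_pos h₁).ne'
  have hΓ₂ := (Real.Gamma_pos_of_pos h₂).ne'
  calc riemannLiouville a β₁ (riemannLiouville a β₂ g) t
      = (Real.Gamma β₁)⁻¹ * (Real.Gamma β₂)⁻¹ *
          ∫ τ in a..t, ∫ σ in a..τ, (t - τ) ^ (β₁ - 1) * ((τ - σ) ^ (β₂ - 1) * g σ) := by
        simp only [riemannLiouville, intervalIntegral.integral_const_mul,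
          mul_left_comm _ (Real.Gamma β₂)⁻¹]
        ring
    _ = (Real.Gamma β₁)⁻¹ * (Real.Gamma β₂)⁻¹ *
          ∫ σ in a..t, beta β₁ β₂ * ((t - σ) ^ (β₁ + β₂ - 1) * g σ) := by
        rw [hswap, intervalIntegral.integral_congr_ae hinner]
    _ = riemannLiouville a (β₁ + β₂) g t := by
        rw [intervalIntegral.integral_const_mul, riemannLiouville, beta]
        field_simp

lemma intervalIntegrable_rpow_mul_riemannLiouville (h₁ : 0 < β₁) (h₂ : 0 < β₂) (hat : a ≤ t)
    (hg : ContinuousOn g (Icc a t)) :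
    IntervalIntegrable (fun τ => (t - τ) ^ (β₁ - 1) * riemannLiouville a β₂ g τ) volume a t := by
  have h := (intervalIntegrable_integral_triangle hat
    (integrableOn_triangle_rpow_mul_rpow h₁ h₂ hat hg)).const_mul (Real.Gamma β₂)⁻¹
  refine h.congr fun τ _ => ?_
  simp only [riemannLiouville, intervalIntegral.integral_const_mul]
  ring

end RiemannLiouville

section Weighted

variable {a t γ β₁ β₂ : ℝ} {ω f : ℝ → ℝ}

lemma RLI_eq_inv_mul_riemannLiouville (a : ℝ) (ω : ℝ → ℝ) (γ : ℝ) (f : ℝ → ℝ) (t : ℝ) :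
    RLI a ω γ f t = (ω t)⁻¹ * riemannLiouville a γ (fun x => ω x * f x) t := by
  rw [RLI, riemannLiouville, one_div, mul_inv]
  ring

lemma RLI_congr {f₁ f₂ : ℝ → ℝ} (hat : a ≤ t) (h : EqOn f₁ f₂ (Icc a t)) :
    RLI a ω γ f₁ t = RLI a ω γ f₂ t := by
  simp only [RLI_eq_inv_mul_riemannLiouville]
  rw [riemannLiouville_congr hat fun x hx => congrArg (ω x * ·) (h hx)]

lemma RLI_sum {ι : Type*} (s : Finset ι) (c : ι → ℝ) (h : ι → ℝ → ℝ)
    (hint : ∀ i ∈ s, IntervalIntegrable (fun τ => (t - τ) ^ (γ - 1) * (ω τ * h i τ)) volume a t) :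
    RLI a ω γ (fun τ => ∑ i ∈ s, c i * h i τ) t = ∑ i ∈ s, c i * RLI a ω γ (h i) t := by
  have hsum : ∀ τ, (t - τ) ^ (γ - 1) * (ω τ * ∑ i ∈ s, c i * h i τ) =
      ∑ i ∈ s, c i * ((t - τ) ^ (γ - 1) * (ω τ * h i τ)) := fun τ => by
    simp only [Finset.mul_sum]
    exact Finset.sum_congr rfl fun i _ => by ring
  simp only [RLI, hsum]
  rw [intervalIntegral.integral_finsetSum fun i hi => (hint i hi).const_mul (c i), Finset.mul_sum]
  refine Finset.sum_congr rfl fun i _ => ?_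
  rw [intervalIntegral.integral_const_mul]
  ring

lemma eqOn_mul_RLI {s : Set ℝ} (hω : ∀ x ∈ s, ω x ≠ 0) (γ : ℝ) :
    EqOn (fun x => ω x * RLI a ω γ f x) (riemannLiouville a γ fun x => ω x * f x) s :=
  fun x hx => by
    dsimp only
    rw [RLI_eq_inv_mul_riemannLiouville, mul_inv_cancel_left₀ (hω x hx)]

theorem RLI_RLI (h₁ : 0 < β₁) (h₂ : 0 < β₂) (hat : a ≤ t) (hω : ∀ x ∈ Icc a t, ω x ≠ 0)
    (hωf : ContinuousOn (fun x => ω x * f x) (Icc a t)) :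
    RLI a ω β₁ (RLI a ω β₂ f) t = RLI a ω (β₁ + β₂) f t := by
  rw [RLI_eq_inv_mul_riemannLiouville, RLI_eq_inv_mul_riemannLiouville,
    riemannLiouville_congr hat (eqOn_mul_RLI hω β₂),
    riemannLiouville_riemannLiouville h₁ h₂ hat hωf]

lemma intervalIntegrable_rpow_mul_RLI (h₁ : 0 < β₁) (h₂ : 0 < β₂) (hat : a ≤ t)
    (hω : ∀ x ∈ Icc a t, ω x ≠ 0) (hωf : ContinuousOn (fun x => ω x * f x) (Icc a t)) :
    IntervalIntegrable (fun τ => (t - τ) ^ (β₁ - 1) * (ω τ * RLI a ω β₂ f τ)) volume a t :=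
  (intervalIntegrable_rpow_mul_riemannLiouville h₁ h₂ hat hωf).congr fun τ hτ => by
    rw [uIoc_of_le hat] at hτ
    simp only [eqOn_mul_RLI hω β₂ (Ioc_subset_Icc_self hτ)]

end Weighted

-- `RLI a ω 0 f = 0` since `Real.Gamma 0 = 0`, hence the separate case `m = 0`.
noncomputable def RLIPow (a : ℝ) (ω : ℝ → ℝ) (β : ℝ) (m : ℕ) (f : ℝ → ℝ) (t : ℝ) : ℝ :=
  if m = 0 then f t else RLI a ω (m * β) f t

section RLIPow

variable {a t β : ℝ} {ω f : ℝ → ℝ}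

lemma RLI_RLIPow (hβ : 0 < β) (hat : a ≤ t) (hω : ∀ x ∈ Icc a t, ω x ≠ 0)
    (hωf : ContinuousOn (fun x => ω x * f x) (Icc a t)) (m : ℕ) :
    RLI a ω β (RLIPow a ω β m f) t = RLIPow a ω β (m + 1) f t := by
  rcases Nat.eq_zero_or_pos m with rfl | hm
  · have hpow : RLIPow a ω β 0 f = f := funext fun _ => if_pos rfl
    simp [hpow, RLIPow]
  · have hpow : RLIPow a ω β m f = RLI a ω (m * β) f := funext fun _ => if_neg hm.ne'
    rw [hpow, RLI_RLI hβ (by positivity) hat hω hωf, RLIPow, if_neg m.succ_ne_zero]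
    push_cast
    ring_nf

lemma intervalIntegrable_rpow_mul_RLIPow (hβ : 0 < β) (hat : a ≤ t)
    (hω : ∀ x ∈ Icc a t, ω x ≠ 0) (hωf : ContinuousOn (fun x => ω x * f x) (Icc a t)) (m : ℕ) :
    IntervalIntegrable (fun τ => (t - τ) ^ (β - 1) * (ω τ * RLIPow a ω β m f τ)) volume a t := by
  rcases Nat.eq_zero_or_pos m with rfl | hm
  · simpa [RLIPow] using
      (intervalIntegrable_sub_rpow hβ a t).mul_continuousOn (by rwa [uIcc_of_le hat])
  · simpa [RLIPow, hm.ne'] using intervalIntegrable_rpow_mul_RLI hβ (by positivity) hat hω hωf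

end RLIPow

theorem Finset.sum_range_choose_mul_pow_succ {R : Type*} [CommSemiring R] (x y : R) (T : ℕ → R)
    (n : ℕ) :
    x * ∑ m ∈ range (n + 1), n.choose m * x ^ (n - m) * y ^ m * T m +
        y * ∑ m ∈ range (n + 1), n.choose m * x ^ (n - m) * y ^ m * T (m + 1) =
      ∑ m ∈ range (n + 2), (n + 1).choose m * x ^ (n + 1 - m) * y ^ m * T m := by
  have h := Finset.sum_choose_succ_mul (fun i j => x ^ j * y ^ i * T i) n
  simp only [← mul_assoc] at h
  rw [h, Finset.mul_sum, Finset.mul_sum]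
  congr 1 <;> refine Finset.sum_congr rfl fun m hm => ?_
  · rw [Nat.sub_add_comm (Finset.mem_range_succ_iff.1 hm), pow_succ]
    ring
  · ring

theorem pI_iterate_formula_general (a b α β p Nα : ℝ)
    (hβ : 0 < β) (ω f : ℝ → ℝ)
    (hω : ContinuousOn ω (Set.Icc a b)) (hωpos : ∀ t ∈ Set.Icc a b, 0 < ω t)
    (hf : ContinuousOn f (Set.Icc a b)) (n : ℕ) :
    ∀ t ∈ Set.Icc a b,
      (pI a ω α β p Nα)^[n] f t =
        ∑ m ∈ Finset.range (n + 1), (n.choose m : ℝ) * ((1 - α) / Nα) ^ (n - m) *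
          (Real.log p * (α / Nα)) ^ m *
          (if m = 0 then f t else RLI a ω (m * β) f t) := by
  induction n with
  | zero => intro t _; simp
  | succ n ih =>
    intro t ht
    have hat : a ≤ t := ht.1
    have hω' : ∀ x ∈ Icc a t, ω x ≠ 0 := fun x hx => (hωpos x ⟨hx.1, hx.2.trans ht.2⟩).ne'
    have hωf : ContinuousOn (fun x => ω x * f x) (Icc a t) :=
      (hω.mul hf).mono (Icc_subset_Icc_right ht.2)
    have hP : EqOn ((pI a ω α β p Nα)^[n] f) (fun τ => ∑ m ∈ Finset.range (n + 1),
        (n.choose m : ℝ) * ((1 - α) / Nα) ^ (n - m) * (Real.log p * (α / Nα)) ^ m *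
          RLIPow a ω β m f τ) (Icc a t) :=
      fun τ hτ => ih τ ⟨hτ.1, hτ.2.trans ht.2⟩
    rw [Function.iterate_succ_apply', pI, RLI_congr hat hP,
      RLI_sum _ _ _ fun m _ => intervalIntegrable_rpow_mul_RLIPow hβ hat hω' hωf m, ih t ht]
    simp only [RLI_RLIPow hβ hat hω' hωf]
    exact Finset.sum_range_choose_mul_pow_succ _ _ (fun m => RLIPow a ω β m f t) n

/-- The `n`-fold iterate of the power fractional integral expands binomially in
weighted Riemann–Liouville integrals (with `RLI` of order `0` interpreted as the
identity). -/
theorem pI_iterate_formula (a b α β p Nα : ℝ) (hab : a ≤ b) (hα0 : 0 ≤ α) (hα1 : α < 1)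
    (hβ : 0 < β) (hp : 0 < p) (hN : 0 < Nα) (ω f : ℝ → ℝ)
    (hω : ContinuousOn ω (Set.Icc a b)) (hωpos : ∀ t ∈ Set.Icc a b, 0 < ω t)
    (hf : ContinuousOn f (Set.Icc a b)) (n : ℕ) :
    ∀ t ∈ Set.Icc a b,
      (pI a ω α β p Nα)^[n] f t =
        ∑ m ∈ Finset.range (n + 1), (n.choose m : ℝ) * ((1 - α) / Nα) ^ (n - m) *
          (Real.log p * (α / Nα)) ^ m *
          (if m = 0 then f t else RLI a ω (m * β) f t) :=
  pI_iterate_formula_general a b α β p Nα hβ ω f hω hωpos hf n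
end

section
/- The $n$-fold power fractional integral of the reciprocal weight is given explicitly by ${}^pI_{a,\omega}^{n[\alpha,\beta]}\left(\frac{1}{\omega}\right)(t) = \frac{1}{\omega(t)} \sum_{m=0}^{n} \binom{n}{m} \chi(\alpha)^{n-m} (\ln p \cdot \varphi(\alpha))^m \frac{(t-a)^{m\beta}}{\Gamma(m\beta+1)}$ for all $t \in [a,b]$. -/
open MeasureTheory

/-! Dividing by the weight turns `pI a ω` into the unweighted operator `pI a (fun _ => 1)`.
By the Beta integral, the unweighted Riemann–Liouville integral of order `β` maps the normalized
power `(t - a) ^ (m β) / Γ(m β + 1)` to the next one, so `pI a (fun _ => 1)` acts on these powers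
as `χ(α) + ln p · φ(α) · S` with `S` the index shift `m ↦ m + 1`. Its `n`-th iterate applied to
the constant `1` (the power with `m = 0`) is therefore the binomial expansion of this operator's
`n`-th power. -/

open Set intervalIntegral

theorem integral_rpow_mul_one_sub_rpow_eq_Gamma {u v : ℝ} (hu : 0 < u) (hv : 0 < v) :
    ∫ x in (0 : ℝ)..1, x ^ (u - 1) * (1 - x) ^ (v - 1) =
      Real.Gamma u * Real.Gamma v / Real.Gamma (u + v) := by
  have hbeta := Complex.betaIntegral_eq_Gamma_mul_div u v (by simpa) (by simpa)
  have hreal : Complex.betaIntegral u v =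
      ((∫ x in (0 : ℝ)..1, x ^ (u - 1) * (1 - x) ^ (v - 1) : ℝ) : ℂ) := by
    rw [Complex.betaIntegral, ← integral_ofReal]
    refine integral_congr fun x hx => ?_
    rw [uIcc_of_le zero_le_one] at hx
    push_cast [Complex.ofReal_cpow hx.1, Complex.ofReal_cpow (sub_nonneg.2 hx.2)]
    ring
  rw [hreal, ← Complex.ofReal_add, Complex.Gamma_ofReal, Complex.Gamma_ofReal,
    Complex.Gamma_ofReal] at hbeta
  exact_mod_cast hbeta

theorem integral_sub_rpow_mul_rpow_sub_s6 {a t β γ : ℝ} (hat : a < t) (hβ : 0 < β)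
    (hγ : -1 < γ) :
    ∫ τ in a..t, (t - τ) ^ (β - 1) * (τ - a) ^ γ =
      Real.Gamma (γ + 1) * Real.Gamma β / Real.Gamma (γ + 1 + β) * (t - a) ^ (γ + β) := by
  set s := t - a with hs
  have hs0 : 0 < s := sub_pos.2 hat
  have hsub := smul_integral_comp_add_mul (fun τ => (t - τ) ^ (β - 1) * (τ - a) ^ γ) s a
    (a := 0) (b := 1)
  rw [mul_zero, add_zero, mul_one, show a + s = t by rw [hs]; ring] at hsub
  rw [← hsub, smul_eq_mul]
  have hscale : ∀ x ∈ uIcc (0 : ℝ) 1, (t - (a + s * x)) ^ (β - 1) * (a + s * x - a) ^ γ =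
      s ^ (β - 1) * s ^ γ * (x ^ ((γ + 1) - 1) * (1 - x) ^ (β - 1)) := by
    intro x hx
    rw [uIcc_of_le zero_le_one] at hx
    rw [show t - (a + s * x) = s * (1 - x) by rw [hs]; ring, add_sub_cancel_left,
      Real.mul_rpow hs0.le (sub_nonneg.2 hx.2), Real.mul_rpow hs0.le hx.1, add_sub_cancel_right]
    ring
  rw [integral_congr hscale, intervalIntegral.integral_const_mul,
    integral_rpow_mul_one_sub_rpow_eq_Gamma (by linarith) hβ, Real.rpow_sub_one hs0.ne',
    Real.rpow_add hs0]
  field_simp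

theorem intervalIntegrable_sub_rpow_mul_rpow_sub_s6 (a t : ℝ) {β γ : ℝ} (hβ : 0 < β)
    (hγ : 0 ≤ γ) :
    IntervalIntegrable (fun τ => (t - τ) ^ (β - 1) * (τ - a) ^ γ) volume a t := by
  have hkernel : IntervalIntegrable (fun τ : ℝ => (t - τ) ^ (β - 1)) volume a t := by
    simpa using (intervalIntegral.intervalIntegrable_rpow' (a := t - a) (b := t - t)
      (by linarith : (-1 : ℝ) < β - 1)).comp_sub_left t
  exact hkernel.mul_continuousOn
    ((Real.continuous_rpow_const hγ).comp (continuous_id.sub continuous_const)).continuousOn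

theorem RLI_const_mul (a : ℝ) (ω : ℝ → ℝ) (β c : ℝ) (f : ℝ → ℝ) (t : ℝ) :
    RLI a ω β (fun τ => c * f τ) t = c * RLI a ω β f t := by
  simp only [RLI, mul_left_comm (ω _) c, mul_left_comm _ c, intervalIntegral.integral_const_mul]

theorem RLI_finset_sum {ι : Type*} (s : Finset ι) (a : ℝ) (ω : ℝ → ℝ) (β : ℝ)
    (f : ι → ℝ → ℝ) (t : ℝ)
    (hf : ∀ i ∈ s, IntervalIntegrable (fun τ => (t - τ) ^ (β - 1) * (ω τ * f i τ)) volume a t) :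
    RLI a ω β (fun τ => ∑ i ∈ s, f i τ) t = ∑ i ∈ s, RLI a ω β (f i) t := by
  simp only [RLI, Finset.mul_sum]
  rw [intervalIntegral.integral_finsetSum hf, Finset.mul_sum]

theorem RLI_eq_RLI_one_div {a t : ℝ} (hat : a ≤ t) {ω f g : ℝ → ℝ} (β : ℝ)
    (hω : ∀ τ ∈ Icc a t, ω τ ≠ 0) (hf : ∀ τ ∈ Icc a t, f τ = g τ / ω τ) :
    RLI a ω β f t = RLI a (fun _ => 1) β g t / ω t := by
  have hcancel : ∀ τ ∈ uIcc a t,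
      (t - τ) ^ (β - 1) * (ω τ * f τ) = (t - τ) ^ (β - 1) * (1 * g τ) := by
    intro τ hτ
    rw [uIcc_of_le hat] at hτ
    rw [hf τ hτ, mul_div_cancel₀ _ (hω τ hτ), one_mul]
  rw [RLI, RLI, integral_congr hcancel]
  ring

noncomputable def fracPow (a β : ℝ) (m : ℕ) (t : ℝ) : ℝ :=
  (t - a) ^ ((m : ℝ) * β) / Real.Gamma ((m : ℝ) * β + 1)

theorem RLI_one_fracPow {a t β : ℝ} (hat : a ≤ t) (hβ : 0 < β) (m : ℕ) :
    RLI a (fun _ => 1) β (fracPow a β m) t = fracPow a β (m + 1) t := by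
  have hsucc : ((m + 1 : ℕ) : ℝ) * β = m * β + β := by push_cast; ring
  rcases hat.eq_or_lt with rfl | hat
  · rw [RLI, integral_same, mul_zero, fracPow, sub_self, Real.zero_rpow (by positivity), zero_div]
  simp only [RLI, fracPow, one_mul, mul_one, mul_div_assoc', intervalIntegral.integral_div]
  rw [integral_sub_rpow_mul_rpow_sub_s6 hat hβ
    (by linarith [show (0 : ℝ) ≤ m * β by positivity]), hsucc, add_right_comm]
  have hΓ₁ := (Real.Gamma_pos_of_pos (by positivity : 0 < (m : ℝ) * β + 1)).ne'
  have hΓ₂ := (Real.Gamma_pos_of_pos (by positivity : 0 < (m : ℝ) * β + β + 1)).ne'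
  have hΓβ := (Real.Gamma_pos_of_pos hβ).ne'
  field_simp

theorem sum_range_succ_choose_mul_pow_mul_pow {R : Type*} [CommSemiring R] (c d : R)
    (x : ℕ → R) (n : ℕ) :
    ∑ m ∈ Finset.range (n + 2), ((n + 1).choose m : R) * c ^ (n + 1 - m) * d ^ m * x m =
      c * ∑ m ∈ Finset.range (n + 1), (n.choose m : R) * c ^ (n - m) * d ^ m * x m +
        d * ∑ m ∈ Finset.range (n + 1), (n.choose m : R) * c ^ (n - m) * d ^ m * x (m + 1) := by
  have hpascal := Finset.sum_choose_succ_mul (fun i j => c ^ j * d ^ i * x i) n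
  refine (Finset.sum_congr rfl fun m _ => by ring).trans (hpascal.trans ?_)
  rw [Finset.mul_sum, Finset.mul_sum]
  congr 1 <;> refine Finset.sum_congr rfl fun m hm => ?_
  · rw [Nat.sub_add_comm (Finset.mem_range_succ_iff.1 hm), pow_succ]
    ring
  · ring

noncomputable def binomFracSum (a β c d : ℝ) (n : ℕ) (t : ℝ) : ℝ :=
  ∑ m ∈ Finset.range (n + 1), (n.choose m : ℝ) * c ^ (n - m) * d ^ m * fracPow a β m t

theorem RLI_one_binomFracSum {a t β : ℝ} (hat : a ≤ t) (hβ : 0 < β) (c d : ℝ) (n : ℕ) :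
    RLI a (fun _ => 1) β (binomFracSum a β c d n) t =
      ∑ m ∈ Finset.range (n + 1),
        (n.choose m : ℝ) * c ^ (n - m) * d ^ m * fracPow a β (m + 1) t := by
  unfold binomFracSum
  rw [RLI_finset_sum]
  · refine Finset.sum_congr rfl fun m _ => ?_
    rw [RLI_const_mul, RLI_one_fracPow hat hβ]
  · intro m _
    have hkernel := intervalIntegrable_sub_rpow_mul_rpow_sub_s6 a t hβ
      (by positivity : (0 : ℝ) ≤ m * β)
    refine (hkernel.const_mul ((n.choose m : ℝ) * c ^ (n - m) * d ^ m /
      Real.Gamma (m * β + 1))).congr fun τ _ => ?_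
    simp only [fracPow]
    ring

theorem pI_eq_pI_one_div {a t : ℝ} (hat : a ≤ t) {ω f g : ℝ → ℝ} (α β p Nα : ℝ)
    (hω : ∀ τ ∈ Icc a t, ω τ ≠ 0) (hf : ∀ τ ∈ Icc a t, f τ = g τ / ω τ) :
    pI a ω α β p Nα f t = pI a (fun _ => 1) α β p Nα g t / ω t := by
  rw [pI, pI, RLI_eq_RLI_one_div hat β hω hf, hf t (right_mem_Icc.2 hat)]
  ring

theorem pI_one_binomFracSum {a t β : ℝ} (hat : a ≤ t) (hβ : 0 < β) (α p Nα : ℝ) (n : ℕ) :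
    pI a (fun _ => 1) α β p Nα (binomFracSum a β ((1 - α) / Nα) (Real.log p * (α / Nα)) n) t =
      binomFracSum a β ((1 - α) / Nα) (Real.log p * (α / Nα)) (n + 1) t := by
  rw [pI, RLI_one_binomFracSum hat hβ, binomFracSum, binomFracSum,
    sum_range_succ_choose_mul_pow_mul_pow]

theorem pI_iterate_inv_weight_general (a b α β p Nα : ℝ)
    (hβ : 0 < β) (ω : ℝ → ℝ)
    (hωpos : ∀ t ∈ Set.Icc a b, 0 < ω t) (n : ℕ) :
    ∀ t ∈ Set.Icc a b,
      (pI a ω α β p Nα)^[n] (fun s => 1 / ω s) t =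
        (1 / ω t) * ∑ m ∈ Finset.range (n + 1), (n.choose m : ℝ) *
          ((1 - α) / Nα) ^ (n - m) * (Real.log p * (α / Nα)) ^ m *
          ((t - a) ^ ((m : ℝ) * β) / Real.Gamma ((m : ℝ) * β + 1)) := by
  suffices h : ∀ t ∈ Icc a b, (pI a ω α β p Nα)^[n] (fun s => 1 / ω s) t =
      binomFracSum a β ((1 - α) / Nα) (Real.log p * (α / Nα)) n t / ω t by
    intro t ht
    rw [h t ht, div_eq_inv_mul, one_div]
    rfl
  induction n with
  | zero =>
    intro t _
    simp [binomFracSum, fracPow]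
  | succ n ih =>
    intro t ht
    have hsub : Icc a t ⊆ Icc a b := Icc_subset_Icc_right ht.2
    rw [Function.iterate_succ_apply', pI_eq_pI_one_div ht.1 α β p Nα
      (fun τ hτ => (hωpos τ (hsub hτ)).ne') (fun τ hτ => ih τ (hsub hτ)),
      pI_one_binomFracSum ht.1 hβ]

/-- Explicit formula for the `n`-fold power fractional integral of the reciprocal
weight. -/
theorem pI_iterate_inv_weight (a b α β p Nα : ℝ) (hab : a ≤ b) (hα0 : 0 ≤ α) (hα1 : α < 1)
    (hβ : 0 < β) (hp : 0 < p) (hN : 0 < Nα) (ω : ℝ → ℝ)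
    (hω : ContinuousOn ω (Set.Icc a b)) (hωpos : ∀ t ∈ Set.Icc a b, 0 < ω t) (n : ℕ) :
    ∀ t ∈ Set.Icc a b,
      (pI a ω α β p Nα)^[n] (fun s => 1 / ω s) t =
        (1 / ω t) * ∑ m ∈ Finset.range (n + 1), (n.choose m : ℝ) *
          ((1 - α) / Nα) ^ (n - m) * (Real.log p * (α / Nα)) ^ m *
          ((t - a) ^ ((m : ℝ) * β) / Real.Gamma ((m : ℝ) * β + 1)) :=
  pI_iterate_inv_weight_general a b α β p Nα hβ ω hωpos n
end

section
/- First-order power Taylor expansion of the identity function: with unit weight $\omega \equiv 1$ and $f(t) = t - a$, one has ${}^pD_{a,1}^{\alpha,\beta} f(t) = \frac{1}{\chi(\alpha)} \sum_{n=0}^{\infty} \frac{(-\mu_\alpha \ln p)^n (t-a)^{\beta n + 1}}{\Gamma(\beta n + 2)}$ for all $t \geq a$. -/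
open MeasureTheory

/-! For `u ≥ 0` the series `pE p β (s * u ^ β) = ∑ (s log p) ^ n u ^ (βn) / Γ(βn + 1)` can be
integrated termwise over `[0, T]`, using `∫₀ᵀ u ^ r / Γ(r + 1) = T ^ (r + 1) / Γ(r + 2)`. Dominated
convergence applies because `Γ(βn + 1)` outgrows every geometric sequence, a consequence of the
log-convexity of `Γ`. Since `t - a` has derivative `1`, the substitution `u = t - τ` turns `pD` into
such an integral with `T = t - a`. -/

open Real Filter

namespace Real

theorem Gamma_add_one_mul_rpow_le_Gamma {c x : ℝ} (hc : 0 < c) (hx : c + 1 ≤ x) :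
    Gamma (c + 1) * c ^ (x - (c + 1)) ≤ Gamma x := by
  rcases hx.eq_or_lt with rfl | hx
  · simp
  -- log-convexity: the slope of `log ∘ Gamma` on `[c + 1, x]` is at least its slope `log c`
  -- on `[c, c + 1]`
  have hslope := convexOn_log_Gamma.slope_mono_adjacent (Set.mem_Ioi.2 hc)
    (Set.mem_Ioi.2 (by linarith : (0 : ℝ) < x)) (lt_add_one c) hx
  have hlog : log (Gamma (c + 1)) - log (Gamma c) = log c := by
    rw [Gamma_add_one hc.ne', log_mul hc.ne' (Gamma_pos_of_pos hc).ne', add_sub_cancel_right]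
  simp only [Function.comp_apply, hlog, add_sub_cancel_left, div_one] at hslope
  rw [← exp_log (Gamma_pos_of_pos (by linarith : (0 : ℝ) < c + 1)),
    ← exp_log (Gamma_pos_of_pos (by linarith : (0 : ℝ) < x)), rpow_def_of_pos hc, ← exp_add,
    exp_le_exp]
  have := (le_div_iff₀ (sub_pos.2 hx)).1 hslope
  linarith

theorem summable_pow_div_Gamma_mul_add_one {β : ℝ} (hβ : 0 < β) (y : ℝ) :
    Summable fun n : ℕ => y ^ n / Gamma (β * n + 1) := by
  -- `c ^ β = q > |y|`, so `Γ(βn + 1) ≥ Γ(c + 1) c ^ (βn - c)` outgrows `|y| ^ n`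
  set q : ℝ := 2 * |y| + 1
  set c : ℝ := q ^ β⁻¹
  have hq : 0 < q := by positivity
  have hc : 0 < c := rpow_pos_of_pos hq _
  have hcβ : c ^ β = q := rpow_inv_rpow hq.le hβ.ne'
  have hratio : |y| / q < 1 := (div_lt_one hq).2 (by linarith [abs_nonneg y])
  refine ((summable_geometric_of_lt_one (by positivity) hratio).mul_left
    (c ^ c / Gamma (c + 1))).of_norm_bounded_eventually_nat ?_
  have hlarge : ∀ᶠ n : ℕ in atTop, c ≤ β * n :=
    (tendsto_natCast_atTop_atTop.const_mul_atTop hβ).eventually_ge_atTop c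
  filter_upwards [hlarge] with n hn
  have hΓn : 0 < Gamma (β * n + 1) := Gamma_pos_of_pos (by positivity)
  have hGamma := Gamma_add_one_mul_rpow_le_Gamma hc (x := β * n + 1) (by linarith)
  rw [show β * n + 1 - (c + 1) = β * n - c by ring, rpow_sub hc, rpow_mul_natCast hc.le, hcβ]
    at hGamma
  rw [norm_div, norm_pow, Real.norm_eq_abs, Real.norm_of_nonneg hΓn.le, div_pow,
    div_le_iff₀ hΓn]
  calc |y| ^ n
      = c ^ c / Gamma (c + 1) * (|y| ^ n / q ^ n) * (Gamma (c + 1) * (q ^ n / c ^ c)) := by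
        field_simp
    _ ≤ c ^ c / Gamma (c + 1) * (|y| ^ n / q ^ n) * Gamma (β * n + 1) := by gcongr

theorem integral_rpow_div_Gamma {r : ℝ} (hr : -1 < r) (T : ℝ) :
    ∫ u in (0 : ℝ)..T, u ^ r / Gamma (r + 1) = T ^ (r + 1) / Gamma (r + 2) := by
  have hr1 : r + 1 ≠ 0 := by linarith
  rw [intervalIntegral.integral_div, integral_rpow (Or.inl hr), zero_rpow hr1, sub_zero,
    show r + 2 = r + 1 + 1 by ring, Gamma_add_one hr1, div_div]

theorem mul_rpow_pow_div_Gamma (z β : ℝ) {u : ℝ} (hu : 0 ≤ u) (n : ℕ) :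
    (z * u ^ β) ^ n / Gamma (β * n + 1) = z ^ n * (u ^ (β * n) / Gamma (β * n + 1)) := by
  rw [mul_pow, rpow_mul_natCast hu, mul_div_assoc]

theorem hasSum_integral_mittagLeffler_rpow {β : ℝ} (hβ : 0 < β) (z : ℝ) {T : ℝ} (hT : 0 ≤ T) :
    HasSum (fun n : ℕ => z ^ n * T ^ (β * n + 1) / Gamma (β * n + 2))
      (∫ u in (0 : ℝ)..T, ∑' n : ℕ, z ^ n * (u ^ (β * n) / Gamma (β * n + 1))) := by
  have hexp (n : ℕ) : 0 ≤ β * n := by positivity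
  have hΓ (n : ℕ) : 0 < Gamma (β * n + 1) := Gamma_pos_of_pos (by linarith [hexp n])
  have hsum (w : ℝ) {u : ℝ} (hu : 0 ≤ u) :
      Summable fun n : ℕ => w ^ n * (u ^ (β * n) / Gamma (β * n + 1)) := by
    simpa only [mul_rpow_pow_div_Gamma w β hu] using
      summable_pow_div_Gamma_mul_add_one hβ (w * u ^ β)
  have hint (n : ℕ) : ∫ u in (0 : ℝ)..T, z ^ n * (u ^ (β * n) / Gamma (β * n + 1)) =
      z ^ n * T ^ (β * n + 1) / Gamma (β * n + 2) := by
    rw [intervalIntegral.integral_const_mul, integral_rpow_div_Gamma (by linarith [hexp n]),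
      mul_div_assoc]
  simp only [← hint]
  refine intervalIntegral.hasSum_integral_of_dominated_convergence
    (fun n _ => ‖z‖ ^ n * (T ^ (β * n) / Gamma (β * n + 1))) (fun n => ?_) (fun n => ?_) ?_
    intervalIntegrable_const ?_
  · exact ((continuous_rpow_const (hexp n)).div_const _ |>.const_mul _).aestronglyMeasurable
  · refine ae_of_all _ fun u hu => ?_
    rw [Set.uIoc_of_le hT] at hu
    rw [norm_mul, norm_pow, Real.norm_of_nonneg (div_nonneg (rpow_nonneg hu.1.le _) (hΓ n).le)]
    gcongr
    exacts [hu.1.le, hu.2]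
  · exact ae_of_all _ fun _ _ => hsum ‖z‖ hT
  · refine ae_of_all _ fun u hu => (hsum z ?_).hasSum
    rw [Set.uIoc_of_le hT] at hu
    exact hu.1.le

end Real

theorem pE_mul_rpow (p β s : ℝ) {u : ℝ} (hu : 0 ≤ u) :
    pE p β (s * u ^ β) = ∑' n : ℕ, (s * log p) ^ n * (u ^ (β * n) / Gamma (β * n + 1)) := by
  refine tsum_congr fun n => ?_
  rw [show s * u ^ β * log p = s * log p * u ^ β by ring, mul_rpow_pow_div_Gamma _ _ hu]

theorem integral_pE_mul_rpow (p s : ℝ) {β T : ℝ} (hβ : 0 < β) (hT : 0 ≤ T) :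
    ∫ u in (0 : ℝ)..T, pE p β (s * u ^ β) =
      ∑' n : ℕ, (s * log p) ^ n * T ^ (β * n + 1) / Gamma (β * n + 2) := by
  rw [intervalIntegral.integral_congr fun u hu =>
    pE_mul_rpow p β s (by rw [Set.uIcc_of_le hT] at hu; exact hu.1)]
  exact (hasSum_integral_mittagLeffler_rpow hβ _ hT).tsum_eq.symm

theorem pD_linear_general (a α β p Nα : ℝ) (hβ : 0 < β) (t : ℝ) (ht : a ≤ t) :
    pD a (fun _ => 1) α β p Nα (fun s => s - a) t =
      (Nα / (1 - α)) *
        ∑' n : ℕ, (-(α / (1 - α)) * Real.log p) ^ n * (t - a) ^ (β * n + 1) /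
          Real.Gamma (β * n + 2) := by
  have hderiv : deriv (fun s => (fun _ => (1 : ℝ)) s * (s - a)) = fun _ => 1 := by
    funext τ
    simp
  rw [pD, hderiv]
  simp only [mul_one]
  rw [intervalIntegral.integral_comp_sub_left (fun u => pE p β (-(α / (1 - α)) * u ^ β)) t,
    sub_self, integral_pE_mul_rpow _ _ hβ (sub_nonneg.2 ht), one_div_div]

/-- Power fractional derivative of `f(t) = t - a` with unit weight. -/
theorem pD_linear (a α β p Nα : ℝ) (hα0 : 0 ≤ α) (hα1 : α < 1) (hβ : 0 < β)
    (hp : 0 < p) (hχ : (1 - α) / Nα ≠ 0) (t : ℝ) (ht : a ≤ t) :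
    pD a (fun _ => 1) α β p Nα (fun s => s - a) t =
      (Nα / (1 - α)) *
        ∑' n : ℕ, (-(α / (1 - α)) * Real.log p) ^ n * (t - a) ^ (β * n + 1) /
          Real.Gamma (β * n + 2) :=
  pD_linear_general a α β p Nα hβ t ht
end
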